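/- arXiv:1203.4688 — 2 statements merged into one kernel-verified Lean document; each statement's English description precedes it below -/
import Mathlib

section
/- Let U, V be m-dimensional subspaces of R^n and let (e_1,...,e_m) be an orthonormal basis of V such that dist(e_i, U) = |Q_U(e_i)| ≤ ϑ for all i, where ϑ ∈ (0, 1/√2). Then ‖π_U − π_V‖ ≤ C₃ϑ for a constant C₃ depending only on m. -/
/-!
Put `α = √m ϑ`. Expanding `v ∈ V` in the basis `(eᵢ)` and using Cauchy–Schwarz gives
`‖Q_U v‖ ≤ α ‖v‖` on `V`, i.e. `‖Q_U π_V‖ ≤ α`. Since `π_U - π_V = π_U Q_V - Q_U π_V` and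
projections are self-adjoint, `‖π_U Q_V‖ = ‖Q_V π_U‖`, so it remains to bound `Q_V` on `U`.
If `α < 1`, then `‖π_U v‖² ≥ (1 - α²) ‖v‖²` on `V`, so `π_U` maps `V` injectively, hence (the
dimensions being equal) onto `U`. Writing `u = π_U v` gives `‖u‖² = ⟪π_V u, v⟫`, which transfers
the lower bound to `‖π_V u‖`, i.e. `‖Q_V u‖ ≤ α ‖u‖` on `U`. Hence `‖π_U - π_V‖ ≤ 2α`, which is
trivial when `α ≥ 1`.
-/

open MeasureTheory Metric Set
open scoped ENNReal

noncomputable section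

abbrev E (n : ℕ) := EuclideanSpace ℝ (Fin n)

noncomputable def proj {n : ℕ} (U : Submodule ℝ (E n)) : E n →L[ℝ] E n :=
  U.subtypeL.comp (Submodule.orthogonalProjection U)

open scoped RealInnerProductSpace
open Module

theorem IsSelfAdjoint.norm_mul_comm {R : Type*} [NonUnitalNormedRing R] [StarRing R]
    [NormedStarGroup R] {a b : R} (ha : IsSelfAdjoint a) (hb : IsSelfAdjoint b) :
    ‖a * b‖ = ‖b * a‖ := by
  rw [← norm_star, star_mul, ha.star_eq, hb.star_eq]

namespace Submodule

variable {F : Type*} [NormedAddCommGroup F] [InnerProductSpace ℝ F]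

theorem norm_starProjection_orthogonal_le_of_mem_span {ι : Type*} [Fintype ι]
    (U : Submodule ℝ F) [U.HasOrthogonalProjection] {e : ι → F} (he : Orthonormal ℝ e)
    {ϑ : ℝ} (hϑ : 0 ≤ ϑ) (he_dist : ∀ i, ‖Uᗮ.starProjection (e i)‖ ≤ ϑ) {v : F}
    (hv : v ∈ span ℝ (range e)) :
    ‖Uᗮ.starProjection v‖ ≤ √(Fintype.card ι) * ϑ * ‖v‖ := by
  obtain ⟨c, rfl⟩ := (mem_span_range_iff_exists_fun ℝ).mp hv
  have hnorm : ‖∑ i, c i • e i‖ = √(∑ i, c i ^ 2) := by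
    rw [norm_eq_sqrt_real_inner, he.inner_sum]
    simp [sq]
  have hcs : ∑ i, |c i| ≤ √(Fintype.card ι) * √(∑ i, c i ^ 2) := by
    rw [← Real.sqrt_mul (Nat.cast_nonneg _)]
    apply Real.le_sqrt_of_sq_le
    simpa [sq_abs] using sq_sum_le_card_mul_sum_sq (s := Finset.univ) (f := fun i => |c i|)
  calc ‖Uᗮ.starProjection (∑ i, c i • e i)‖ ≤ ∑ i, |c i| * ϑ := by
        rw [map_sum]
        refine (norm_sum_le _ _).trans (Finset.sum_le_sum fun i _ => ?_)
        rw [map_smul, norm_smul, Real.norm_eq_abs]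
        gcongr
        exact he_dist i
    _ = (∑ i, |c i|) * ϑ := (Finset.sum_mul ..).symm
    _ ≤ √(Fintype.card ι) * √(∑ i, c i ^ 2) * ϑ := by gcongr
    _ = √(Fintype.card ι) * ϑ * ‖∑ i, c i • e i‖ := by rw [hnorm]; ring

theorem norm_starProjection_orthogonal_le_iff (K : Submodule ℝ F) [K.HasOrthogonalProjection]
    {α : ℝ} (hα : 0 ≤ α) (x : F) :
    ‖Kᗮ.starProjection x‖ ≤ α * ‖x‖ ↔ (1 - α ^ 2) * ‖x‖ ^ 2 ≤ ‖K.starProjection x‖ ^ 2 := by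
  rw [← pow_le_pow_iff_left₀ (norm_nonneg _) (by positivity) two_ne_zero, mul_pow]
  have := K.norm_sq_eq_add_norm_sq_starProjection x
  constructor <;> intro h <;> linarith

theorem exists_mem_starProjection_eq_of_finrank_eq {U V : Submodule ℝ F}
    [FiniteDimensional ℝ U] [FiniteDimensional ℝ V] (hrank : finrank ℝ U = finrank ℝ V)
    (hdisj : Disjoint V Uᗮ) {u : F} (hu : u ∈ U) : ∃ v ∈ V, U.starProjection v = u := by
  let T : V →ₗ[ℝ] U := (U.orthogonalProjectionOnto : F →ₗ[ℝ] U) ∘ₗ V.subtype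
  have hT : Function.Injective T := by
    refine (injective_iff_map_eq_zero T).mpr fun v hv => ?_
    have hvU : (v : F) ∈ Uᗮ := (starProjection_apply_eq_zero_iff U).mp (congrArg Subtype.val hv)
    exact Subtype.ext (disjoint_def.mp hdisj v v.2 hvU)
  obtain ⟨v, hv⟩ := (LinearMap.injective_iff_surjective_of_finrank_eq_finrank hrank.symm).mp hT
    ⟨u, hu⟩
  exact ⟨v, v.2, congrArg Subtype.val hv⟩

theorem mul_sq_norm_le_sq_norm_starProjection_of_finrank_eq {U V : Submodule ℝ F}
    [FiniteDimensional ℝ U] [FiniteDimensional ℝ V] (hrank : finrank ℝ U = finrank ℝ V)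
    {c : ℝ} (hc : 0 < c) (hV : ∀ v ∈ V, c * ‖v‖ ^ 2 ≤ ‖U.starProjection v‖ ^ 2)
    {u : F} (hu : u ∈ U) : c * ‖u‖ ^ 2 ≤ ‖V.starProjection u‖ ^ 2 := by
  have hdisj : Disjoint V Uᗮ := disjoint_def.mpr fun v hvV hvU => by
    have hv := hV v hvV
    rw [(starProjection_apply_eq_zero_iff U).mpr hvU, norm_zero] at hv
    simpa using (by nlinarith : ‖v‖ ^ 2 ≤ 0)
  obtain ⟨v, hvV, hvu⟩ := exists_mem_starProjection_eq_of_finrank_eq hrank hdisj hu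
  have hinner : ‖u‖ ^ 2 ≤ ‖V.starProjection u‖ * ‖v‖ :=
    calc ‖u‖ ^ 2 = ⟪u, U.starProjection v⟫ := by rw [hvu, real_inner_self_eq_norm_sq]
      _ = ⟪u, v⟫ := by rw [← inner_starProjection_left_eq_right, starProjection_eq_self_iff.mpr hu]
      _ = ⟪V.starProjection u, v⟫ := by
          rw [inner_starProjection_left_eq_right, starProjection_eq_self_iff.mpr hvV]
      _ ≤ ‖V.starProjection u‖ * ‖v‖ := real_inner_le_norm _ _
  rcases (norm_nonneg u).eq_or_lt with hu0 | hu0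
  · simp [← hu0]
  refine le_of_mul_le_mul_right ?_ (pow_pos hu0 2)
  calc c * ‖u‖ ^ 2 * ‖u‖ ^ 2 = c * (‖u‖ ^ 2) ^ 2 := by ring
    _ ≤ c * (‖V.starProjection u‖ * ‖v‖) ^ 2 := by gcongr
    _ = ‖V.starProjection u‖ ^ 2 * (c * ‖v‖ ^ 2) := by ring
    _ ≤ ‖V.starProjection u‖ ^ 2 * ‖u‖ ^ 2 := by gcongr; exact hvu ▸ hV v hvV

theorem norm_starProjection_orthogonal_le_of_finrank_eq {U V : Submodule ℝ F}
    [FiniteDimensional ℝ U] [FiniteDimensional ℝ V] (hrank : finrank ℝ U = finrank ℝ V)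
    {α : ℝ} (hα₀ : 0 ≤ α) (hα₁ : α < 1) (hV : ∀ v ∈ V, ‖Uᗮ.starProjection v‖ ≤ α * ‖v‖)
    {u : F} (hu : u ∈ U) : ‖Vᗮ.starProjection u‖ ≤ α * ‖u‖ :=
  (V.norm_starProjection_orthogonal_le_iff hα₀ u).mpr <|
    mul_sq_norm_le_sq_norm_starProjection_of_finrank_eq hrank (by nlinarith)
      (fun v hv => (U.norm_starProjection_orthogonal_le_iff hα₀ v).mp (hV v hv)) hu

theorem norm_starProjection_orthogonal_mul_starProjection_le {U V : Submodule ℝ F}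
    [U.HasOrthogonalProjection] [V.HasOrthogonalProjection] {α : ℝ} (hα : 0 ≤ α)
    (hV : ∀ v ∈ V, ‖Uᗮ.starProjection v‖ ≤ α * ‖v‖) :
    ‖Uᗮ.starProjection * V.starProjection‖ ≤ α :=
  ContinuousLinearMap.opNorm_le_bound _ hα fun x =>
    calc ‖Uᗮ.starProjection (V.starProjection x)‖ ≤ α * ‖V.starProjection x‖ :=
          hV _ (V.starProjection_apply_mem x)
      _ ≤ α * ‖x‖ := by gcongr; exact V.norm_starProjection_apply_le x

theorem starProjection_sub_starProjection (U V : Submodule ℝ F) [U.HasOrthogonalProjection]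
    [V.HasOrthogonalProjection] :
    U.starProjection - V.starProjection =
      U.starProjection * Vᗮ.starProjection - Uᗮ.starProjection * V.starProjection := by
  rw [starProjection_orthogonal', starProjection_orthogonal']
  noncomm_ring

theorem norm_starProjection_sub_starProjection_le [CompleteSpace F] {U V : Submodule ℝ F}
    [FiniteDimensional ℝ U] [FiniteDimensional ℝ V] (hrank : finrank ℝ U = finrank ℝ V)
    {α : ℝ} (hα : 0 ≤ α) (hV : ∀ v ∈ V, ‖Uᗮ.starProjection v‖ ≤ α * ‖v‖) :
    ‖U.starProjection - V.starProjection‖ ≤ 2 * α := by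
  rcases le_or_gt 1 α with hα₁ | hα₁
  · calc ‖U.starProjection - V.starProjection‖
          ≤ ‖U.starProjection‖ + ‖V.starProjection‖ := norm_sub_le _ _
      _ ≤ 1 + 1 := add_le_add U.starProjection_norm_le V.starProjection_norm_le
      _ ≤ 2 * α := by linarith
  have hU : ∀ u ∈ U, ‖Vᗮ.starProjection u‖ ≤ α * ‖u‖ := fun u hu =>
    norm_starProjection_orthogonal_le_of_finrank_eq hrank hα hα₁ hV hu
  rw [starProjection_sub_starProjection]
  calc ‖U.starProjection * Vᗮ.starProjection - Uᗮ.starProjection * V.starProjection‖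
        ≤ ‖U.starProjection * Vᗮ.starProjection‖ + ‖Uᗮ.starProjection * V.starProjection‖ :=
        norm_sub_le _ _
    _ = ‖Vᗮ.starProjection * U.starProjection‖ + ‖Uᗮ.starProjection * V.starProjection‖ := by
        rw [(isSelfAdjoint_starProjection U).norm_mul_comm (isSelfAdjoint_starProjection Vᗮ)]
    _ ≤ α + α := add_le_add (norm_starProjection_orthogonal_mul_starProjection_le hα hU)
        (norm_starProjection_orthogonal_mul_starProjection_le hα hV)
    _ = 2 * α := by ring

end Submodule

/-- For every `m` there is a constant `C₃ = C₃(m)` with the following property: if `U`, `V`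
are `m`-dimensional subspaces of ℝⁿ and `(e_1,…,e_m)` is an orthonormal basis of `V` with
`dist(e i, U) = ‖e i − π_U (e i)‖ ≤ ϑ` for all `i`, where `ϑ ∈ (0, 1/√2)`,
then `‖π_U − π_V‖ ≤ C₃ ϑ`. -/
theorem grassmann_dist_ang (m : ℕ) :
    ∃ C₃ : ℝ, 0 < C₃ ∧
      ∀ (n : ℕ) (ϑ : ℝ), ϑ ∈ Set.Ioo (0:ℝ) (1 / Real.sqrt 2) →
        ∀ (U V : Submodule ℝ (E n)) (e : Fin m → E n),
          Module.finrank ℝ U = m →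
          Orthonormal ℝ e →
          Submodule.span ℝ (Set.range e) = V →
          (∀ i, ‖e i - proj U (e i)‖ ≤ ϑ) →
          ‖proj U - proj V‖ ≤ C₃ * ϑ := by
  refine ⟨2 * √m + 1, by positivity, ?_⟩
  rintro n ϑ ⟨hϑ, -⟩ U V e hU he rfl hd
  have hrank : finrank ℝ U = finrank ℝ (Submodule.span ℝ (range e)) := by
    rw [hU, finrank_span_eq_card he.linearIndependent, Fintype.card_fin]
  have hV (v : E n) (hv : v ∈ Submodule.span ℝ (range e)) :
      ‖Uᗮ.starProjection v‖ ≤ √m * ϑ * ‖v‖ := by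
    simpa using U.norm_starProjection_orthogonal_le_of_mem_span he hϑ.le
      (fun i => by rw [Submodule.starProjection_orthogonal_val]; exact hd i) hv
  calc ‖proj U - proj (Submodule.span ℝ (range e))‖ ≤ 2 * (√m * ϑ) :=
        Submodule.norm_starProjection_sub_starProjection_le hrank (by positivity) hV
    _ ≤ (2 * √m + 1) * ϑ := by linarith

end
end

section
/- Let Σ ⊂ R^n be a set, x ∈ Σ, r ∈ (0, diam Σ], and H : Σ → G(n,m) a map. Then for every z ∈ Σ ∩ B(x, β r/2), where β = β_Σ(x,r) ≤ 1, the tangent-point curvature satisfies K_tp(z) := sup_{y∈Σ} 2 dist(y, z + H(z))/|y−z|² ≥ (4/9) β_Σ(x,r)/r. -/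
open MeasureTheory Metric Set
open scoped ENNReal

noncomputable section

/-- The beta number `β_A(x,r)` with respect to `m`-planes. -/
noncomputable def betaNum {n : ℕ} (m : ℕ) (A : Set (E n)) (x : E n) (r : ℝ) : ℝ :=
  r⁻¹ * ⨅ H : {H : Submodule ℝ (E n) // Module.finrank ℝ H = m},
      ⨆ z ∈ A ∩ Metric.ball x r, Metric.infDist z ((fun v => x + v) '' (H.1 : Set (E n)))

/-- The global tangent-point curvature of `A` at `z` with respect to the plane field `H`:
`K_tp(z) = sup_{y ∈ A} 2 dist(y, z + H z)/|y−z|²`. -/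
noncomputable def Ktp {n : ℕ} (H : E n → Submodule ℝ (E n)) (A : Set (E n)) (z : E n) : ℝ≥0∞ :=
  ⨆ y ∈ A, ENNReal.ofReal
    (2 * Metric.infDist y ((fun v => z + v) '' ((H z) : Set (E n))) / ‖y - z‖ ^ 2)

/-!
Since `H z` competes in the infimum defining `β = β_A(x,r)`, the points of `A ∩ B(x,r)` reach
distance `βr` from the plane `x + H z`. Moving that plane to `z + H z` changes distances by at most
`|z - x| < βr/2`, while `|y - z| < r + βr/2 ≤ 3r/2` because `β ≤ 1`; hence
`sup_y 2 dist(y, z + H z)/|y - z|² ≥ (βr/2)/(9r²/8) = 4β/(9r)`.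
-/

section Translate

variable {F : Type*} [SeminormedAddCommGroup F]

lemma infDist_add_image (y z : F) (s : Set F) :
    infDist y ((fun v => z + v) '' s) = infDist (y - z) s := by
  simpa using infDist_image (x := y - z) (t := s) (IsometryEquiv.addLeft z).isometry

lemma infDist_add_image_le_add_dist (y x z : F) (s : Set F) :
    infDist y ((fun v => x + v) '' s) ≤ infDist y ((fun v => z + v) '' s) + dist z x := by
  rw [infDist_add_image, infDist_add_image, dist_comm z x, ← dist_sub_left y x z]
  exact infDist_le_infDist_add_dist

lemma infDist_add_image_le_norm_sub {s : Set F} (hs : (0 : F) ∈ s) (y z : F) :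
    infDist y ((fun v => z + v) '' s) ≤ ‖y - z‖ := by
  rw [infDist_add_image]
  simpa using infDist_le_dist_of_mem (x := y - z) hs

end Translate

lemma betaNum_mul_le_iSup {n m : ℕ} {A : Set (E n)} {x : E n} {r : ℝ} (hr : 0 < r)
    (W : Submodule ℝ (E n)) (hW : Module.finrank ℝ W = m) :
    betaNum m A x r * r ≤
      ⨆ w ∈ A ∩ ball x r, infDist w ((fun v => x + v) '' (W : Set (E n))) := by
  rw [betaNum, mul_comm, mul_inv_cancel_left₀ hr.ne']
  refine ciInf_le (f := fun W : {W : Submodule ℝ (E n) // Module.finrank ℝ W = m} =>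
    ⨆ w ∈ A ∩ ball x r, infDist w ((fun v => x + v) '' (W.1 : Set (E n)))) ?_ ⟨W, hW⟩
  exact ⟨0, forall_mem_range.2 fun W =>
    Real.iSup_nonneg fun w => Real.iSup_nonneg fun _ => infDist_nonneg⟩

lemma infDist_le_mul_toReal_Ktp {n : ℕ} {H : E n → Submodule ℝ (E n)} {A : Set (E n)}
    {y z : E n} (hy : y ∈ A) (hK : Ktp H A z ≠ ⊤) :
    infDist y ((fun v => z + v) '' (H z : Set (E n))) ≤ ‖y - z‖ ^ 2 / 2 * (Ktp H A z).toReal := by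
  set d := infDist y ((fun v => z + v) '' (H z : Set (E n)))
  have hd : d ≤ ‖y - z‖ := infDist_add_image_le_norm_sub (H z).zero_mem y z
  have hterm : 2 * d / ‖y - z‖ ^ 2 ≤ (Ktp H A z).toReal :=
    (ENNReal.ofReal_le_iff_le_toReal hK).1 <|
      le_iSup₂ (f := fun w (_ : w ∈ A) => ENNReal.ofReal
        (2 * infDist w ((fun v => z + v) '' (H z : Set (E n))) / ‖w - z‖ ^ 2)) y hy
  rcases (norm_nonneg (y - z)).eq_or_lt with hyz | hyz
  · rw [← hyz] at hd ⊢
    simpa using hd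
  · rw [div_le_iff₀ (by positivity)] at hterm
    linear_combination hterm / 2

theorem tangent_point_curvature_ge_beta_general (n m : ℕ)
    (A : Set (E n)) (H : E n → Submodule ℝ (E n))
    (hH : ∀ z ∈ A, Module.finrank ℝ (H z) = m)
    (x : E n) (r : ℝ) (hr : 0 < r)
    (hβ : betaNum m A x r ≤ 1) :
    ∀ z ∈ A ∩ Metric.ball x (betaNum m A x r * r / 2),
      ENNReal.ofReal (4 / 9 * betaNum m A x r / r) ≤ Ktp H A z := by
  rintro z ⟨hzA, hzx⟩
  rw [mem_ball] at hzx
  by_cases hK : Ktp H A z = ⊤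
  · exact hK ▸ le_top
  set k := (Ktp H A z).toReal
  have hk : 0 ≤ k := ENNReal.toReal_nonneg
  have hfar : ∀ y ∈ A ∩ ball x r,
      infDist y ((fun v => x + v) '' (H z : Set (E n))) ≤ 9 * r ^ 2 / 8 * k + dist z x := by
    rintro y ⟨hyA, hyx⟩
    have hyz : ‖y - z‖ ≤ 3 * r / 2 := by
      rw [← dist_eq_norm]
      nlinarith [dist_triangle y x z, dist_comm x z, mem_ball.1 hyx]
    calc _ ≤ infDist y ((fun v => z + v) '' (H z : Set (E n))) + dist z x :=
          infDist_add_image_le_add_dist y x z _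
      _ ≤ ‖y - z‖ ^ 2 / 2 * k + dist z x := by grw [infDist_le_mul_toReal_Ktp hyA hK]
      _ ≤ (3 * r / 2) ^ 2 / 2 * k + dist z x := by gcongr
      _ = 9 * r ^ 2 / 8 * k + dist z x := by ring
  have hβr : betaNum m A x r * r ≤ 9 * r ^ 2 / 8 * k + dist z x :=
    (betaNum_mul_le_iSup hr (H z) (hH z hzA)).trans <|
      Real.iSup_le (fun y => Real.iSup_le (hfar y) (by positivity)) (by positivity)
  refine (ENNReal.ofReal_le_iff_le_toReal hK).2 ?_
  rw [div_le_iff₀ hr]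
  nlinarith

/-- Tangent-point curvature is large near a point where the beta number is large:
for `A ⊂ ℝⁿ`, `x ∈ A`, `r ∈ (0, diam A]` and any plane field `H : A → G(n,m)`, every
`z ∈ A ∩ B(x, βr/2)`, where `β = β_A(x,r) ≤ 1`, satisfies
`K_tp(z) ≥ (4/9) β_A(x,r)/r`. -/
theorem tangent_point_curvature_ge_beta (n m : ℕ) (hmn : m ≤ n)
    (A : Set (E n)) (H : E n → Submodule ℝ (E n))
    (hH : ∀ z ∈ A, Module.finrank ℝ (H z) = m)
    (x : E n) (hx : x ∈ A) (r : ℝ) (hr : 0 < r) (hrd : r ≤ Metric.diam A)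
    (hβ : betaNum m A x r ≤ 1) :
    ∀ z ∈ A ∩ Metric.ball x (betaNum m A x r * r / 2),
      ENNReal.ofReal (4 / 9 * betaNum m A x r / r) ≤ Ktp H A z :=
  tangent_point_curvature_ge_beta_general n m A H hH x r hr hβ

end
end
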